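/- Under the hypotheses b_k = 0 for k ≥ n, a state i ∈ {1,…,n−1} satisfies h_i < i (is a rejuvenation state) if and only if E[min(τ, n−i)] < (1−p)·E[(i+τ)·b_{i+τ}]. -/
import Mathlib


open scoped BigOperators

/-- Binomial probability `g_{kj}(p) = C(k,j) p^j (1-p)^{k-j}` for `j ≤ k`, else `0`. -/
noncomputable def g (k j : ℕ) (p : ℝ) : ℝ :=
  if j ≤ k then (k.choose j : ℝ) * p ^ j * (1 - p) ^ (k - j) else 0

/-- `Q_{ij}`: no-division part of the transition probability. -/
noncomputable def Qmat (n : ℕ) (q b : ℕ → ℝ) (i j : ℕ) : ℝ :=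
  if j < n then (if i ≤ j then q (j - i) * (1 - b j) else 0)
  else ∑' t : ℕ, if n ≤ i + t then q t * (1 - b (i + t)) else 0

/-- `R_{ij}(p)`: division part of the transition probability. -/
noncomputable def Rmat (n : ℕ) (q b : ℕ → ℝ) (p : ℝ) (i j : ℕ) : ℝ :=
  if j < n then ∑' t : ℕ, q t * b (i + t) * g (i + t) j p
  else ∑' t : ℕ, if n ≤ i + t then
      q t * b (i + t) * ∑ j' ∈ Finset.Icc n (i + t), g (i + t) j' p
    else 0

/-- Transition probabilities `p_{ij} = Q_{ij} + R_{ij}(p)` for `i < n`, and `p_{nn} = 1`. -/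
noncomputable def pmat (n : ℕ) (q b : ℕ → ℝ) (p : ℝ) (i j : ℕ) : ℝ :=
  if i < n then Qmat n q b i j + Rmat n q b p i j
  else if j = n then 1 else 0

/-- The conditional mean of the next state, `h_i = ∑_{j=1}^n j p_{ij}`. -/
noncomputable def hmean (n : ℕ) (q b : ℕ → ℝ) (p : ℝ) (i : ℕ) : ℝ :=
  ∑ j ∈ Finset.Icc 1 n, (j : ℝ) * pmat n q b p i j

lemma binom_mean (k : ℕ) (p : ℝ) :
    ∑ j ∈ Finset.range (k + 1), (j : ℝ) * ((k.choose j : ℝ) * p ^ j * (1 - p) ^ (k - j))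
      = k * p := by
  cases k with
  | zero => simp
  | succ k' =>
    rw [Finset.sum_range_succ']
    have h1 : ∀ j ∈ Finset.range (k' + 1),
        ((j + 1 : ℕ) : ℝ) * (((k' + 1).choose (j + 1) : ℝ) * p ^ (j + 1) * (1 - p) ^ (k' + 1 - (j + 1)))
          = ((k' + 1 : ℕ) : ℝ) * p * ((k'.choose j : ℝ) * p ^ j * (1 - p) ^ (k' - j)) := by
      intro j hj
      have h2 : (k' + 1) * k'.choose j = (k' + 1).choose (j + 1) * (j + 1) := Nat.add_one_mul_choose_eq k' j
      have h3 := congrArg (Nat.cast : ℕ → ℝ) h2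
      push_cast at h3 ⊢
      linear_combination (-(p ^ (j + 1) * (1 - p) ^ (k' - j))) * h3
    rw [Finset.sum_congr rfl h1, ← Finset.mul_sum]
    have h5 : ∑ j ∈ Finset.range (k' + 1), (k'.choose j : ℝ) * p ^ j * (1 - p) ^ (k' - j) = 1 := by
      have h := add_pow p (1 - p) k'
      simp only [add_sub_cancel, one_pow] at h
      calc ∑ j ∈ Finset.range (k' + 1), (k'.choose j : ℝ) * p ^ j * (1 - p) ^ (k' - j)
          = ∑ j ∈ Finset.range (k' + 1), p ^ j * (1 - p) ^ (k' - j) * (k'.choose j : ℝ) :=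
            Finset.sum_congr rfl fun j _ => by ring
        _ = 1 := h.symm
    rw [h5]
    push_cast
    ring

lemma sum_g_mean (N k : ℕ) (hk : k < N) (p : ℝ) :
    ∑ j ∈ Finset.range N, (j : ℝ) * g k j p = k * p := by
  rw [← Finset.sum_subset (Finset.range_subset_range.2 (by omega : k + 1 ≤ N))
      (fun j _ hj => by
        simp only [Finset.mem_range, not_lt] at hj
        have : ¬ j ≤ k := by omega
        simp [g, this])]
  rw [← binom_mean k p]
  exact Finset.sum_congr rfl fun j hj => by
    have : j ≤ k := by simpa [Nat.lt_succ_iff] using Finset.mem_range.1 hj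
    simp [g, this, mul_assoc]

theorem rejuvenation_state_iff (n : ℕ) (hn : 1 ≤ n) (q b : ℕ → ℝ) (p : ℝ)
    (hq0 : ∀ k, 0 ≤ q k) (hq1 : ∑' k, q k = 1) (hqs : Summable q)
    (hp : p ∈ Set.Icc (0 : ℝ) 1) (hb : ∀ k, b k ∈ Set.Icc (0 : ℝ) 1)
    (hbn : ∀ k, n ≤ k → b k = 0) :
    ∀ i, 1 ≤ i → i ≤ n - 1 →
      (hmean n q b p i < i ↔
        (∑' t : ℕ, q t * (min t (n - i) : ℕ)) <
          (1 - p) * ∑' t : ℕ, q t * ((i + t : ℕ) : ℝ) * b (i + t)) := by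
  intro i hi1 hi2
  have hin : i < n := by omega
  set m := n - i with hm
  have hm1 : 1 ≤ m := by omega
  have him : i + m = n := by omega
  set S : ℝ := ∑ t ∈ Finset.range m, q t with hS
  -- tail mass
  have htailq : (∑' t : ℕ, q (t + m)) = 1 - S := by
    have h := Summable.sum_add_tsum_nat_add (f := q) m hqs
    rw [hq1] at h
    linarith
  -- Q at j = n
  have htail : (∑' t : ℕ, if n ≤ i + t then q t * (1 - b (i + t)) else 0) = 1 - S := by
    have hcongr : ∀ t, (if n ≤ i + t then q t * (1 - b (i + t)) else 0)
        = (if m ≤ t then q t else 0) := by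
      intro t
      by_cases h : n ≤ i + t
      · rw [if_pos h, if_pos (by omega), hbn _ h]; ring
      · rw [if_neg h, if_neg (by omega)]
    rw [tsum_congr hcongr]
    have hfs : Summable (fun t => if m ≤ t then q t else 0) := by
      apply Summable.of_nonneg_of_le (fun t => ?_) (fun t => ?_) hqs
      · split <;> [exact hq0 _; exact le_refl 0]
      · split <;> [exact le_refl _; exact hq0 _]
    have h := Summable.sum_add_tsum_nat_add (f := fun t => if m ≤ t then q t else 0) m hfs
    have hz : ∑ t ∈ Finset.range m, (if m ≤ t then q t else 0) = 0 := by
      apply Finset.sum_eq_zero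
      intro t ht
      rw [if_neg (by simpa using Finset.mem_range.1 ht)]
    have he : (∑' t : ℕ, if m ≤ t + m then q (t + m) else 0) = ∑' t : ℕ, q (t + m) :=
      tsum_congr fun t => if_pos (by omega)
    rw [hz, zero_add, he, htailq] at h
    linarith
  -- R at j = n
  have hRn : (∑' t : ℕ, if n ≤ i + t then
      q t * b (i + t) * ∑ j' ∈ Finset.Icc n (i + t), g (i + t) j' p else 0) = 0 := by
    have : ∀ t : ℕ, (if n ≤ i + t then
        q t * b (i + t) * ∑ j' ∈ Finset.Icc n (i + t), g (i + t) j' p else 0) = 0 := by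
      intro t
      by_cases h : n ≤ i + t
      · rw [if_pos h, hbn _ h]; ring
      · rw [if_neg h]
    rw [tsum_congr this, tsum_zero]
  -- R at j < n : finite sum
  have hRj : ∀ j : ℕ, (∑' t : ℕ, q t * b (i + t) * g (i + t) j p)
      = ∑ t ∈ Finset.range m, q t * b (i + t) * g (i + t) j p := by
    intro j
    apply tsum_eq_sum
    intro t ht
    have : n ≤ i + t := by
      have := Finset.mem_range.not.1 ht
      omega
    rw [hbn _ this]; ring
  -- U tsum
  have hU : (∑' t : ℕ, q t * ((i + t : ℕ) : ℝ) * b (i + t))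
      = ∑ t ∈ Finset.range m, q t * ((i + t : ℕ) : ℝ) * b (i + t) := by
    apply tsum_eq_sum
    intro t ht
    have : n ≤ i + t := by
      have := Finset.mem_range.not.1 ht
      omega
    rw [hbn _ this]; ring
  -- min tsum
  have hmin : (∑' t : ℕ, q t * ((min t m : ℕ) : ℝ))
      = (∑ t ∈ Finset.range m, q t * (t : ℝ)) + (m : ℝ) * (1 - S) := by
    have hsumm : Summable (fun t => q t * ((min t m : ℕ) : ℝ)) := by
      apply Summable.of_nonneg_of_le (fun t => ?_) (fun t => ?_) (hqs.mul_right (m : ℝ))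
      · have : (0:ℝ) ≤ ((min t m : ℕ) : ℝ) := Nat.cast_nonneg _
        exact mul_nonneg (hq0 t) this
      · exact mul_le_mul_of_nonneg_left (Nat.cast_le.2 (min_le_right t m)) (hq0 t)
    have h := Summable.sum_add_tsum_nat_add (f := fun t => q t * ((min t m : ℕ) : ℝ)) m hsumm
    have e1 : ∑ t ∈ Finset.range m, q t * ((min t m : ℕ) : ℝ)
        = ∑ t ∈ Finset.range m, q t * (t : ℝ) := by
      apply Finset.sum_congr rfl
      intro t ht
      rw [min_eq_left (le_of_lt (Finset.mem_range.1 ht))]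
    have e2 : (∑' t : ℕ, q (t + m) * ((min (t + m) m : ℕ) : ℝ)) = (1 - S) * m := by
      have : ∀ t : ℕ, q (t + m) * ((min (t + m) m : ℕ) : ℝ) = q (t + m) * (m : ℝ) := by
        intro t
        rw [min_eq_right (by omega)]
      rw [tsum_congr this, tsum_mul_right, htailq]
    rw [e1, e2] at h
    linarith
  -- pmat as sum
  have hpm : ∀ j, pmat n q b p i j = Qmat n q b i j + Rmat n q b p i j := by
    intro j; unfold pmat; rw [if_pos hin]
  -- extend sum to range (n+1)
  have hmean1 : hmean n q b p i = ∑ j ∈ Finset.range (n + 1), (j : ℝ) * pmat n q b p i j := by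
    unfold hmean
    apply Finset.sum_subset
    · intro x hx
      simp only [Finset.mem_Icc] at hx
      exact Finset.mem_range.2 (by omega)
    · intro x hx hnx
      simp only [Finset.mem_Icc, not_and, not_le] at hnx
      have : x = 0 := by
        by_contra hx0
        have := hnx (by omega)
        have := Finset.mem_range.1 hx
        omega
      simp [this]
  -- j = n term
  have hnterm : pmat n q b p i n = 1 - S := by
    unfold pmat Qmat Rmat
    rw [if_pos hin, if_neg (lt_irrefl n), if_neg (lt_irrefl n), htail, hRn]
    ring
  -- Q sum
  have hQsum : ∑ j ∈ Finset.range n, (j : ℝ) * Qmat n q b i j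
      = ∑ t ∈ Finset.range m, ((i + t : ℕ) : ℝ) * (q t * (1 - b (i + t))) := by
    have e : ∀ j ∈ Finset.range n, (j : ℝ) * Qmat n q b i j
        = (j : ℝ) * (if i ≤ j then q (j - i) * (1 - b j) else 0) := by
      intro j hj
      unfold Qmat
      rw [if_pos (Finset.mem_range.1 hj)]
    rw [Finset.sum_congr rfl e]
    rw [← Finset.sum_subset (s₁ := Finset.Ico i n)
        (fun x hx => Finset.mem_range.2 (Finset.mem_Ico.1 hx).2)
        (fun x hx hnx => by
          have h1 := Finset.mem_range.1 hx
          have h2 : ¬ i ≤ x := by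
            intro h
            exact hnx (Finset.mem_Ico.2 ⟨h, h1⟩)
          rw [if_neg h2, mul_zero])]
    rw [Finset.sum_Ico_eq_sum_range]
    apply Finset.sum_congr rfl
    intro t ht
    rw [if_pos (Nat.le_add_right i t), Nat.add_sub_cancel_left]
  -- R sum
  have hRsum : ∑ j ∈ Finset.range n, (j : ℝ) * Rmat n q b p i j
      = ∑ t ∈ Finset.range m, q t * b (i + t) * (((i + t : ℕ) : ℝ) * p) := by
    have e : ∀ j ∈ Finset.range n, (j : ℝ) * Rmat n q b p i j
        = ∑ t ∈ Finset.range m, (j : ℝ) * (q t * b (i + t) * g (i + t) j p) := by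
      intro j hj
      unfold Rmat
      rw [if_pos (Finset.mem_range.1 hj), hRj j, Finset.mul_sum]
    rw [Finset.sum_congr rfl e, Finset.sum_comm]
    apply Finset.sum_congr rfl
    intro t ht
    have htn : i + t < n := by
      have := Finset.mem_range.1 ht
      omega
    calc ∑ j ∈ Finset.range n, (j : ℝ) * (q t * b (i + t) * g (i + t) j p)
        = q t * b (i + t) * ∑ j ∈ Finset.range n, (j : ℝ) * g (i + t) j p := by
          rw [Finset.mul_sum]
          exact Finset.sum_congr rfl fun j _ => by ring
      _ = q t * b (i + t) * (((i + t : ℕ) : ℝ) * p) := by rw [sum_g_mean n (i + t) htn p]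
  -- key identity
  have key : hmean n q b p i
      = i + ((∑ t ∈ Finset.range m, q t * (t : ℝ)) + (m : ℝ) * (1 - S))
        - (1 - p) * (∑ t ∈ Finset.range m, q t * ((i + t : ℕ) : ℝ) * b (i + t)) := by
    rw [hmean1, Finset.sum_range_succ, hnterm]
    have hsplit : ∑ j ∈ Finset.range n, (j : ℝ) * pmat n q b p i j
        = (∑ j ∈ Finset.range n, (j : ℝ) * Qmat n q b i j)
          + ∑ j ∈ Finset.range n, (j : ℝ) * Rmat n q b p i j := by
      rw [← Finset.sum_add_distrib]
      exact Finset.sum_congr rfl fun j _ => by rw [hpm]; ring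
    rw [hsplit, hQsum, hRsum]
    have hcomb : (∑ t ∈ Finset.range m, ((i + t : ℕ) : ℝ) * (q t * (1 - b (i + t))))
        + (∑ t ∈ Finset.range m, q t * b (i + t) * (((i + t : ℕ) : ℝ) * p))
        = ∑ t ∈ Finset.range m,
            ((i : ℝ) * q t + q t * (t : ℝ) - (1 - p) * (q t * ((i + t : ℕ) : ℝ) * b (i + t))) := by
      rw [← Finset.sum_add_distrib]
      apply Finset.sum_congr rfl
      intro t ht
      push_cast
      ring
    rw [hcomb]
    rw [Finset.sum_sub_distrib, Finset.sum_add_distrib, ← Finset.mul_sum, ← Finset.mul_sum]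
    have hn' : (n : ℝ) = (i : ℝ) + (m : ℝ) := by exact_mod_cast him.symm
    rw [hn', ← hS]
    have : ∑ t ∈ Finset.range m, q t * ((i + t : ℕ) : ℝ) * b (i + t)
        = ∑ t ∈ Finset.range m, q t * (((i : ℝ) + (t : ℝ)) * b (i + t)) := by
      apply Finset.sum_congr rfl
      intro t ht
      push_cast
      ring
    rw [this]
    ring
  rw [key, hmin, hU]
  constructor <;> intro h <;> linarith
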